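/- arXiv:1405.0875 — 2 statements merged into one kernel-verified Lean document; each statement's English description precedes it below -/
import Mathlib

section
/- Let 𝒰 be a real Hilbert space, (𝒫, μ) a measure space with μ finite, α > 0, and J : 𝒰 → 𝒫 → ℝ such that for each p the map v ↦ J(v;p) is strongly convex with constant α, and such that p ↦ J(v(p);p) is μ-integrable for every v ∈ L²(𝒫;𝒰). Then the functional J_𝒫 : L²(𝒫;𝒰) → ℝ defined by J_𝒫(v) = ∫_𝒫 J(v(p);p) μ(dp) is strongly convex with the same constant α with respect to the L²(𝒫;𝒰) norm: for all v, w ∈ L²(𝒫;𝒰) and t ∈ [0,1], J_𝒫(tv+(1−t)w) ≤ t·J_𝒫(v) + (1−t)·J_𝒫(w) − (α/2)·t(1−t)·‖v−w‖²_{L²(𝒫;𝒰)}. -/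
open MeasureTheory

theorem integral_le_of_forall_le_lincomb {P : Type*} [MeasurableSpace P] {μ : Measure P}
    {F f g h : P → ℝ} (hF : Integrable F μ) (hf : Integrable f μ) (hg : Integrable g μ)
    (hh : Integrable h μ) (a b c : ℝ) (hle : ∀ p, F p ≤ a * f p + b * g p - c * h p) :
    ∫ p, F p ∂μ ≤ a * ∫ p, f p ∂μ + b * ∫ p, g p ∂μ - c * ∫ p, h p ∂μ := by
  have hfg : Integrable (fun p => a * f p + b * g p) μ := (hf.const_mul a).add (hg.const_mul b)
  calc ∫ p, F p ∂μ ≤ ∫ p, (a * f p + b * g p - c * h p) ∂μ :=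
        integral_mono hF (hfg.sub (hh.const_mul c)) hle
    _ = a * ∫ p, f p ∂μ + b * ∫ p, g p ∂μ - c * ∫ p, h p ∂μ := by
        rw [integral_sub hfg (hh.const_mul c), integral_add (hf.const_mul a) (hg.const_mul b),
          integral_const_mul, integral_const_mul, integral_const_mul]

theorem integrated_functional_strongly_convex_general
    {U : Type*} [NormedAddCommGroup U] [InnerProductSpace ℝ U]
    {P : Type*} [MeasurableSpace P] (μ : Measure P)
    (α : ℝ) (J : U → P → ℝ)
    (hconv : ∀ (p : P) (v w : U), ∀ t ∈ Set.Icc (0 : ℝ) 1,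
      J (t • v + (1 - t) • w) p ≤
        t * J v p + (1 - t) * J w p - α / 2 * (t * (1 - t)) * ‖v - w‖ ^ 2)
    (hint : ∀ v : P → U, MemLp v 2 μ → Integrable (fun p => J (v p) p) μ) :
    ∀ v w : P → U, MemLp v 2 μ → MemLp w 2 μ → ∀ t ∈ Set.Icc (0 : ℝ) 1,
      (∫ p, J (t • v p + (1 - t) • w p) p ∂μ) ≤
        t * (∫ p, J (v p) p ∂μ) + (1 - t) * (∫ p, J (w p) p ∂μ)
          - α / 2 * (t * (1 - t)) * ∫ p, ‖v p - w p‖ ^ 2 ∂μ := by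
  intro v w hv hw t ht
  have hcomb : MemLp (fun p => t • v p + (1 - t) • w p) 2 μ :=
    (hv.const_smul t).add (hw.const_smul (1 - t))
  exact integral_le_of_forall_le_lincomb (hint _ hcomb) (hint _ hv) (hint _ hw)
    ((hv.sub hw).integrable_norm_pow two_ne_zero) _ _ _ fun p => hconv p (v p) (w p) t ht

/-- If `v ↦ J(v;p)` is strongly convex with constant `α` uniformly in `p` and
`p ↦ J(v(p);p)` is integrable for every `v ∈ L²(𝒫;𝒰)`, then the integrated
functional `J_𝒫(v) = ∫ J(v(p);p) dμ` is strongly convex with the same constant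
`α` with respect to the `L²(𝒫;𝒰)` norm. -/
theorem integrated_functional_strongly_convex
    {U : Type*} [NormedAddCommGroup U] [InnerProductSpace ℝ U] [CompleteSpace U]
    {P : Type*} [MeasurableSpace P] (μ : Measure P) [IsFiniteMeasure μ]
    (α : ℝ) (hα : 0 < α) (J : U → P → ℝ)
    (hconv : ∀ (p : P) (v w : U), ∀ t ∈ Set.Icc (0 : ℝ) 1,
      J (t • v + (1 - t) • w) p ≤
        t * J v p + (1 - t) * J w p - α / 2 * (t * (1 - t)) * ‖v - w‖ ^ 2)
    (hint : ∀ v : P → U, MemLp v 2 μ → Integrable (fun p => J (v p) p) μ) :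
    ∀ v w : P → U, MemLp v 2 μ → MemLp w 2 μ → ∀ t ∈ Set.Icc (0 : ℝ) 1,
      (∫ p, J (t • v p + (1 - t) • w p) p ∂μ) ≤
        t * (∫ p, J (v p) p ∂μ) + (1 - t) * (∫ p, J (w p) p ∂μ)
          - α / 2 * (t * (1 - t)) * ∫ p, ‖v p - w p‖ ^ 2 ∂μ :=
  integrated_functional_strongly_convex_general μ α J hconv hint
end

section
/- Let 𝒰 be a real Hilbert space, (𝒫, μ) a measure space with μ finite, α > 0, and J : 𝒰 → 𝒫 → ℝ such that for each p, v ↦ J(v;p) is Fréchet differentiable with gradient ∇J(v;p), strongly convex with constant α uniformly in p, and p ↦ J(v(p);p) is μ-integrable for every v ∈ L²(𝒫;𝒰). Let λ₁, …, λ_r ∈ L²(μ;ℝ) be linearly independent and write F_r(λ,v)(p) = Σ_i λ_i(p) • v_i. Then there exists a unique minimizer v* = (v*₁,…,v*_r) ∈ 𝒰^r of (v₁,…,v_r) ↦ ∫_𝒫 J(F_r(λ,v)(p);p) μ(dp), and v* is characterized by the equations ∫_𝒫 ⟨∇J(F_r(λ,v*)(p);p), F_r(λ,δv)(p)⟩ μ(dp)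 = 0 for all δv = (δv₁,…,δv_r) ∈ 𝒰^r. -/
/-!
The objective `G v = ∫ J (∑ i, λᵢ(p) • vᵢ; p) dμ` is strongly convex on `𝒰ʳ`: pointwise strong
convexity of `J` integrates to strong convexity with respect to `v ↦ ∫ ‖∑ i, λᵢ • vᵢ‖²`, and
linear independence of the `λᵢ` (through a biorthogonal family in `L²`) makes this quadratic form
dominate `‖v‖²`. The stationarity integrals are the line derivatives of `G`: convexity traps the
difference quotients of `J` between two integrable secant slopes, so dominated convergence applies,
and the closed graph theorem makes them continuous functionals. A minimizing sequence of a strongly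
convex function is Cauchy, and the continuous line derivative at its limit shows that the limit is
a minimizer; by convexity, minimality is equivalent to stationarity.
-/

open MeasureTheory Set Filter
open scoped RealInnerProductSpace Topology

section StrongConvexMinimization

variable {E : Type*} [NormedAddCommGroup E] [NormedSpace ℝ E]

lemma strongConvexOn_univ_of_forall_mem_Icc {f : E → ℝ} {m : ℝ}
    (h : ∀ v w, ∀ t ∈ Icc (0 : ℝ) 1,
      f (t • v + (1 - t) • w) ≤ t * f v + (1 - t) * f w - m / 2 * (t * (1 - t)) * ‖v - w‖ ^ 2) :
    StrongConvexOn univ m f := by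
  refine ⟨convex_univ, fun v _ w _ a b ha hb hab => ?_⟩
  obtain rfl : b = 1 - a := by linarith
  have := h v w a ⟨ha, by linarith⟩
  simp only [smul_eq_mul]
  linarith

lemma ConvexOn.comp_line {f : E → ℝ} (hf : ConvexOn ℝ univ f) (x z : E) :
    ConvexOn ℝ univ fun t : ℝ => f (x + t • z) := by
  simpa [Function.comp_def, AffineMap.lineMap_apply, add_comm] using
    hf.comp_affineMap (AffineMap.lineMap x (x + z))

variable {G : E → ℝ} {m d : ℝ} {v δ : E}

lemma StrongConvexOn.convexOn {s : Set E} (hG : StrongConvexOn s m G) (hm : 0 ≤ m) :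
    ConvexOn ℝ s G :=
  UniformConvexOn.convexOn hG fun r => by positivity

lemma ConvexOn.add_le_of_hasLineDerivAt (hG : ConvexOn ℝ univ G)
    (h : HasLineDerivAt ℝ G d v δ) : G v + d ≤ G (v + δ) := by
  have := (hG.comp_line v δ).le_slope_of_hasDerivAt (mem_univ 0) (mem_univ 1) one_pos h
  simp only [slope_def_field, one_smul, zero_smul, add_zero, sub_zero, div_one] at this
  linarith

lemma StrongConvexOn.le_midpoint (hG : StrongConvexOn univ m G) (v w : E) :
    G ((1 / 2 : ℝ) • v + (1 / 2 : ℝ) • w) ≤ (G v + G w) / 2 - m / 8 * ‖v - w‖ ^ 2 := by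
  have := hG.2 (mem_univ v) (mem_univ w) (by norm_num : (0 : ℝ) ≤ 1 / 2)
    (by norm_num : (0 : ℝ) ≤ 1 / 2) (by norm_num)
  simp only [smul_eq_mul] at this
  linarith

lemma StrongConvexOn.add_le_of_hasLineDerivAt (hG : StrongConvexOn univ m G) (hm : 0 ≤ m)
    (h : HasLineDerivAt ℝ G d v δ) : G v + d + m / 4 * ‖δ‖ ^ 2 ≤ G (v + δ) := by
  have half := (hG.convexOn hm).add_le_of_hasLineDerivAt (h.smul (1 / 2 : ℝ))
  have mid := hG.le_midpoint (v + δ) v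
  rw [show (1 / 2 : ℝ) • (v + δ) + (1 / 2 : ℝ) • v = v + (1 / 2 : ℝ) • δ by module,
    add_sub_cancel_left] at mid
  simp only [smul_eq_mul] at half
  linarith

lemma forall_le_iff_eq_zero_of_hasLineDerivAt (hG : ConvexOn ℝ univ G) {L : StrongDual ℝ E}
    (hL : ∀ δ, HasLineDerivAt ℝ G (L δ) v δ) : (∀ w, G v ≤ G w) ↔ L = 0 := by
  refine ⟨fun hmin => ContinuousLinearMap.ext fun δ => ?_, ?_⟩
  · have hloc : IsLocalMin (fun t : ℝ => G (v + t • δ)) 0 :=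
      Eventually.of_forall fun t => by simpa using hmin (v + t • δ)
    exact hloc.hasDerivAt_eq_zero (hL δ)
  · rintro rfl w
    simpa using hG.add_le_of_hasLineDerivAt (hL (w - v))

lemma StrongConvexOn.eq_of_forall_le (hG : StrongConvexOn univ m G) (hm : 0 < m) {w : E}
    (hv : ∀ z, G v ≤ G z) (hw : ∀ z, G w ≤ G z) : v = w :=
  (hG.strictConvexOn hm).eq_of_isMinOn (isMinOn_univ_iff.2 hv) (isMinOn_univ_iff.2 hw)
    (mem_univ v) (mem_univ w)

lemma StrongConvexOn.bddBelow_range (hG : StrongConvexOn univ m G) (hm : 0 < m) {L : StrongDual ℝ E}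
    (hL : ∀ δ, HasLineDerivAt ℝ G (L δ) v δ) : BddBelow (range G) := by
  refine ⟨G v - ‖L‖ ^ 2 / m, ?_⟩
  rintro _ ⟨w, rfl⟩
  have h1 := hG.add_le_of_hasLineDerivAt hm.le (hL (w - v))
  have h2 := neg_le_of_abs_le (L.le_opNorm (w - v))
  have hsq : ‖L‖ * ‖w - v‖ - m / 4 * ‖w - v‖ ^ 2 ≤ ‖L‖ ^ 2 / m := by
    rw [le_div_iff₀ hm]
    nlinarith [sq_nonneg (m * ‖w - v‖ - 2 * ‖L‖)]
  rw [add_sub_cancel] at h1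
  linarith

theorem StrongConvexOn.exists_forall_le [CompleteSpace E] (hG : StrongConvexOn univ m G)
    (hm : 0 < m) {L : E → StrongDual ℝ E} (hL : ∀ v δ, HasLineDerivAt ℝ G (L v δ) v δ) :
    ∃ v, ∀ w, G v ≤ G w := by
  have hbdd := hG.bddBelow_range hm (hL 0)
  obtain ⟨u, -, hu, hmem⟩ := exists_seq_tendsto_sInf (range_nonempty G) hbdd
  set d := sInf (range G)
  choose V hV using hmem
  have hdist : ∀ a b, dist (V a) (V b) ^ 2 ≤ 4 / m * ((u a - d) + (u b - d)) := fun a b => by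
    have mid := hG.le_midpoint (V a) (V b)
    have hd := csInf_le hbdd (mem_range_self ((1 / 2 : ℝ) • V a + (1 / 2 : ℝ) • V b))
    rw [hV, hV] at mid
    rw [dist_eq_norm, div_mul_eq_mul_div, le_div_iff₀ hm]
    linarith
  have hcauchy : CauchySeq V := by
    rw [cauchySeq_iff_tendsto_dist_atTop_0, ← prod_atTop_atTop_eq]
    have hbound : Tendsto (fun n : ℕ × ℕ => 4 / m * ((u n.1 - d) + (u n.2 - d)))
        (atTop ×ˢ atTop) (𝓝 0) := by
      simpa using (((hu.comp tendsto_fst).sub_const d).add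
        ((hu.comp tendsto_snd).sub_const d)).const_mul (4 / m)
    have hsq := squeeze_zero (fun _ => sq_nonneg _) (fun n : ℕ × ℕ => hdist n.1 n.2) hbound
    simpa [Real.sqrt_sq dist_nonneg] using hsq.sqrt
  obtain ⟨v, hv⟩ := cauchySeq_tendsto_of_complete hcauchy
  have hLv : Tendsto (fun n => G v + L v (V n - v)) atTop (𝓝 (G v)) := by
    have := ((L v).continuous.tendsto _).comp (hv.sub_const v)
    simpa using this.const_add (G v)
  have hvd : G v ≤ d := le_of_tendsto_of_tendsto' hLv hu fun n => by
    have := hG.add_le_of_hasLineDerivAt hm.le (hL v (V n - v))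
    rw [add_sub_cancel, hV] at this
    nlinarith [sq_nonneg ‖V n - v‖]
  exact ⟨v, fun w => hvd.trans (csInf_le hbdd (mem_range_self w))⟩

end StrongConvexMinimization

section Integral

variable {P : Type*} [MeasurableSpace P] {μ : Measure P}

theorem hasDerivAt_integral_of_convexOn {φ : P → ℝ → ℝ} {φ' : P → ℝ} {x : ℝ}
    (hconv : ∀ p, ConvexOn ℝ univ (φ p)) (hderiv : ∀ p, HasDerivAt (φ p) (φ' p) x)
    (hint : ∀ t, Integrable (fun p => φ p t) μ) :
    Integrable φ' μ ∧ HasDerivAt (fun t => ∫ p, φ p t ∂μ) (∫ p, φ' p ∂μ) x := by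
  have hslope : ∀ t, Integrable (fun p => slope (φ p) x t) μ := fun t => by
    simp only [slope_def_field]
    exact ((hint t).sub (hint x)).div_const _
  -- convexity traps every slope over `[x - 1, x + 1]`, and the derivative, between the two extremes
  set bound : P → ℝ := fun p => |slope (φ p) x (x - 1)| + |slope (φ p) x (x + 1)|
  have hbound : Integrable bound μ := (hslope _).abs.add (hslope _).abs
  have hmono : ∀ p, MonotoneOn (slope (φ p) x) (univ \ {x}) := fun p =>
    (hconv p).slope_mono (mem_univ x)
  have hle : ∀ {a b c : ℝ}, a ≤ b → b ≤ c → |b| ≤ |a| + |c| := fun hab hbc =>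
    (abs_le_max_abs_abs hab hbc).trans (max_le_add_of_nonneg (abs_nonneg _) (abs_nonneg _))
  have hφ'_bound : ∀ p, |φ' p| ≤ bound p := fun p => by
    refine hle ?_ ((hconv p).le_slope_of_hasDerivAt (mem_univ x) (mem_univ _) (by linarith)
      (hderiv p))
    rw [slope_comm]
    exact (hconv p).slope_le_of_hasDerivAt (mem_univ _) (mem_univ x) (by linarith) (hderiv p)
  have hslope_bound : ∀ᶠ t in 𝓝[≠] x, ∀ᵐ p ∂μ, ‖slope (φ p) x t‖ ≤ bound p := by
    filter_upwards [nhdsWithin_le_nhds (Icc_mem_nhds (by linarith : x - 1 < x)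
      (by linarith : x < x + 1)), self_mem_nhdsWithin] with t ht htx
    exact ae_of_all _ fun p => hle (hmono p ⟨mem_univ _, by simp⟩ ⟨mem_univ _, htx⟩ ht.1)
      (hmono p ⟨mem_univ _, htx⟩ ⟨mem_univ _, by simp⟩ ht.2)
  have hlim : ∀ᵐ p ∂μ, Tendsto (fun t => slope (φ p) x t) (𝓝[≠] x) (𝓝 (φ' p)) :=
    ae_of_all _ fun p => hasDerivAt_iff_tendsto_slope.1 (hderiv p)
  have hφ'_int : Integrable φ' μ :=
    (hbound.mono' (aestronglyMeasurable_of_tendsto_ae _ (fun t => (hslope t).1) hlim)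
      (ae_of_all _ hφ'_bound))
  refine ⟨hφ'_int, hasDerivAt_iff_tendsto_slope.2 ?_⟩
  have := tendsto_integral_filter_of_dominated_convergence bound
    (Eventually.of_forall fun t => (hslope t).1) hslope_bound hbound hlim
  refine this.congr fun t => ?_
  simp only [slope_def_field]
  rw [integral_div, integral_sub (hint t) (hint x)]

variable {E : Type*} [NormedAddCommGroup E] [NormedSpace ℝ E] [CompleteSpace E]

theorem exists_continuousLinearMap_eq_integral {ψ : P → StrongDual ℝ E}
    (hψ : ∀ x, Integrable (fun p => ψ p x) μ) :
    ∃ L : StrongDual ℝ E, ∀ x, L x = ∫ p, ψ p x ∂μ := by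
  let T : E →ₗ[ℝ] P →₁[μ] ℝ :=
    { toFun x := (hψ x).toL1
      map_add' x y := by
        simp only [map_add]
        exact Integrable.toL1_add _ _ (hψ x) (hψ y)
      map_smul' c x := by
        simp only [map_smul, smul_eq_mul, RingHom.id_apply]
        exact Integrable.toL1_smul _ (hψ x) c }
  -- closed graph: an `L¹`-limit agrees a.e. with the pointwise limit along a subsequence
  have hT : Continuous T := T.continuous_of_seq_closed_graph fun u x y hu hTu => by
    obtain ⟨ns, hns, hlim⟩ := (tendstoInMeasure_of_tendsto_Lp hTu).exists_seq_tendsto_ae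
    have hcoe : ∀ᵐ p ∂μ, ∀ n, T (u n) p = ψ p (u n) :=
      ae_all_iff.2 fun n => (hψ (u n)).coeFn_toL1
    refine Lp.ext ?_
    filter_upwards [hlim, hcoe, (hψ x).coeFn_toL1] with p hp hpn hpx
    refine tendsto_nhds_unique hp ?_
    simp only [Function.comp_apply, hpn]
    exact hpx.symm ▸ ((ψ p).continuous.tendsto x).comp (hu.comp hns.tendsto_atTop)
  refine ⟨L1.integralCLM.comp ⟨T, hT⟩, fun x => ?_⟩
  show L1.integralCLM ((hψ x).toL1) = _
  rw [← L1.integral_eq, L1.integral_eq_integral]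
  exact integral_congr_ae (hψ x).coeFn_toL1

end Integral

section Biorthogonal

variable {H : Type*} [NormedAddCommGroup H] [InnerProductSpace ℝ H]

lemma LinearIndependent.exists_inner_eq_ite {ι : Type*} [Finite ι] [DecidableEq ι] {b : ι → H}
    (hb : LinearIndependent ℝ b) : ∃ θ : ι → H, ∀ i k, ⟪θ i, b k⟫ = if i = k then 1 else 0 := by
  let S := Submodule.span ℝ (range b)
  let B := Module.Basis.span hb
  have : FiniteDimensional ℝ S := FiniteDimensional.span_of_finite ℝ (finite_range b)
  have : CompleteSpace S := FiniteDimensional.complete ℝ S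
  -- the Riesz representatives of the coordinate functionals of `B`
  refine ⟨fun i => ((InnerProductSpace.toDual ℝ S).symm
    (LinearMap.toContinuousLinearMap (B.coord i)) : H), fun i k => ?_⟩
  have hk : b k = (B k : H) := by simp [B, Module.Basis.span_apply]
  rw [hk, ← Submodule.coe_inner, InnerProductSpace.toDual_symm_apply]
  simp [Finsupp.single_apply, eq_comm]

end Biorthogonal

section L2

variable {P : Type*} [MeasurableSpace P] {μ : Measure P}

lemma inner_toLp_eq_integral_mul {f h : P → ℝ} (hf : MemLp f 2 μ) (hh : MemLp h 2 μ) :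
    ⟪hf.toLp f, hh.toLp h⟫ = ∫ p, f p * h p ∂μ := by
  rw [L2.inner_def]
  refine integral_congr_ae ?_
  filter_upwards [hf.coeFn_toLp, hh.coeFn_toLp] with p h1 h2
  simp [h1, h2, mul_comm]

lemma sq_integral_mul_le {f h : P → ℝ} (hf : MemLp f 2 μ) (hh : MemLp h 2 μ) :
    (∫ p, f p * h p ∂μ) ^ 2 ≤ (∫ p, f p ^ 2 ∂μ) * ∫ p, h p ^ 2 ∂μ := by
  have := real_inner_mul_inner_self_le (hf.toLp f) (hh.toLp h)
  simpa only [inner_toLp_eq_integral_mul, ← sq] using this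

end L2

section WeightedSum

variable {ι : Type*} [Fintype ι] {U : Type*} [NormedAddCommGroup U] [InnerProductSpace ℝ U]

/-- The paper's `F_r(λ, v)(p)` is `weightedSum (fun i => λ i p) v`. -/
def weightedSum (c : ι → ℝ) : (ι → U) →L[ℝ] U where
  toFun v := ∑ i, c i • v i
  map_add' v w := by simp [smul_add, Finset.sum_add_distrib]
  map_smul' a v := by
    simp only [Pi.smul_apply, RingHom.id_apply, Finset.smul_sum]
    exact Finset.sum_congr rfl fun i _ => smul_comm _ _ _
  cont := by fun_prop

lemma weightedSum_apply (c : ι → ℝ) (v : ι → U) : weightedSum c v = ∑ i, c i • v i := rfl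

variable {P : Type*} [MeasurableSpace P] {μ : Measure P} {lam : ι → P → ℝ}

lemma memLp_weightedSum (hlam : ∀ i, MemLp (lam i) 2 μ) (v : ι → U) :
    MemLp (fun p => weightedSum (fun i => lam i p) v) 2 μ :=
  memLp_finsetSum _ fun i _ =>
    MemLp.smul (p := 2) (q := ⊤) (r := 2) (memLp_top_const (v i)) (hlam i)

lemma exists_pos_mul_norm_sq_le_integral_weightedSum [CompleteSpace U]
    (hlam : ∀ i, MemLp (lam i) 2 μ) (hli : LinearIndependent ℝ fun i => (hlam i).toLp (lam i)) :
    ∃ c > 0, ∀ v : ι → U, c * ‖v‖ ^ 2 ≤ ∫ p, ‖weightedSum (fun i => lam i p) v‖ ^ 2 ∂μ := by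
  classical
  obtain ⟨θ, hθ⟩ := hli.exists_inner_eq_ite
  have hθlam : ∀ i k, ∫ p, θ i p * lam k p ∂μ = if i = k then 1 else 0 := fun i k => by
    rw [← hθ i k, ← inner_toLp_eq_integral_mul (Lp.memLp (θ i)) (hlam k), Lp.toLp_coeFn]
  have hcoord : ∀ (v : ι → U) i, v i = ∫ p, θ i p • weightedSum (fun k => lam k p) v ∂μ := by
    intro v i
    simp_rw [weightedSum_apply, Finset.smul_sum, smul_smul]
    rw [integral_finsetSum (f := fun k p => (θ i p * lam k p) • v k) _ fun k _ =>
      ((Lp.memLp (θ i)).integrable_mul (hlam k)).smul_const (v k)]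
    simp [integral_smul_const, hθlam]
  set C := ∑ i, ∫ p, θ i p ^ 2 ∂μ
  have hC : 0 ≤ C := Finset.sum_nonneg fun i _ => integral_nonneg fun p => sq_nonneg _
  refine ⟨(C + 1)⁻¹, by positivity, fun v => ?_⟩
  set Q := ∫ p, ‖weightedSum (fun i => lam i p) v‖ ^ 2 ∂μ
  have hQ : 0 ≤ Q := integral_nonneg fun p => sq_nonneg _
  have hcomp : ∀ i, ‖v i‖ ^ 2 ≤ (C + 1) * Q := fun i => by
    have h1 : ‖v i‖ ≤ ∫ p, ‖θ i p‖ * ‖weightedSum (fun k => lam k p) v‖ ∂μ := by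
      conv_lhs => rw [hcoord v i]
      exact (norm_integral_le_integral_norm _).trans_eq (by simp only [norm_smul])
    have h2 := sq_integral_mul_le (Lp.memLp (θ i)).norm (memLp_weightedSum hlam v).norm
    simp only [Real.norm_eq_abs, sq_abs] at h1 h2
    calc ‖v i‖ ^ 2 ≤ (∫ p, |θ i p| * ‖weightedSum (fun k => lam k p) v‖ ∂μ) ^ 2 :=
          pow_le_pow_left₀ (norm_nonneg _) h1 2
      _ ≤ (∫ p, θ i p ^ 2 ∂μ) * Q := h2
      _ ≤ (C + 1) * Q := by
          gcongr
          exact (Finset.single_le_sum (f := fun k => ∫ p, θ k p ^ 2 ∂μ)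
            (fun k _ => integral_nonneg fun p => sq_nonneg (θ k p))
            (Finset.mem_univ i)).trans (le_add_of_nonneg_right zero_le_one)
  have hv : ‖v‖ ≤ √((C + 1) * Q) := (pi_norm_le_iff_of_nonneg (Real.sqrt_nonneg _)).2
    fun i => Real.le_sqrt_of_sq_le (hcomp i)
  rw [inv_mul_le_iff₀ (by positivity)]
  calc ‖v‖ ^ 2 ≤ √((C + 1) * Q) ^ 2 := pow_le_pow_left₀ (norm_nonneg _) hv 2
    _ = (C + 1) * Q := Real.sq_sqrt (by positivity)

end WeightedSum

section IntegralComp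

variable {E U P : Type*} [NormedAddCommGroup E] [NormedSpace ℝ E] [NormedAddCommGroup U]
  [InnerProductSpace ℝ U] [MeasurableSpace P] {μ : Measure P} {J : U → P → ℝ} {g : U → P → U}
  {A : P → E →L[ℝ] U}

lemma strongConvexOn_integral_comp {m c : ℝ} (hm : 0 ≤ m)
    (hJ : ∀ p, StrongConvexOn univ m (J · p)) (hint : ∀ v, Integrable (fun p => J (A p v) p) μ)
    (hA : ∀ v, MemLp (fun p => A p v) 2 μ) (hcoer : ∀ v, c * ‖v‖ ^ 2 ≤ ∫ p, ‖A p v‖ ^ 2 ∂μ) :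
    StrongConvexOn univ (m * c) fun v => ∫ p, J (A p v) p ∂μ := by
  refine ⟨convex_univ, fun v _ w _ a b ha hb hab => ?_⟩
  have hpt : ∀ p, J (A p (a • v + b • w)) p ≤
      a * J (A p v) p + b * J (A p w) p - a * b * (m / 2 * ‖A p (v - w)‖ ^ 2) := fun p => by
    simpa [map_sub] using (hJ p).2 (mem_univ (A p v)) (mem_univ (A p w)) ha hb hab
  have hv : Integrable (fun p => a * J (A p v) p) μ := (hint v).const_mul a
  have hw : Integrable (fun p => b * J (A p w) p) μ := (hint w).const_mul b
  have hQ : Integrable (fun p => a * b * (m / 2 * ‖A p (v - w)‖ ^ 2)) μ :=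
    ((hA (v - w)).norm.integrable_sq.const_mul _).const_mul _
  calc ∫ p, J (A p (a • v + b • w)) p ∂μ
      ≤ ∫ p, (a * J (A p v) p + b * J (A p w) p - a * b * (m / 2 * ‖A p (v - w)‖ ^ 2)) ∂μ :=
        integral_mono (hint _) ((hv.add hw).sub hQ) hpt
    _ = a * ∫ p, J (A p v) p ∂μ + b * ∫ p, J (A p w) p ∂μ
          - a * b * (m / 2 * ∫ p, ‖A p (v - w)‖ ^ 2 ∂μ) := by
        rw [integral_sub (f := fun p => a * J (A p v) p + b * J (A p w) p) (hv.add hw) hQ,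
          integral_add hv hw]
        simp only [integral_const_mul]
    _ ≤ a • ∫ p, J (A p v) p ∂μ + b • ∫ p, J (A p w) p ∂μ - a * b * (m * c / 2 * ‖v - w‖ ^ 2) := by
        have := hcoer (v - w)
        simp only [smul_eq_mul]
        have hab0 : 0 ≤ a * b := mul_nonneg ha hb
        nlinarith [mul_le_mul_of_nonneg_left this (mul_nonneg hab0 hm)]

variable [CompleteSpace U]

lemma HasGradientAt.hasLineDerivAt {f : U → ℝ} {g' x : U} (h : HasGradientAt f g' x) (z : U) :
    HasLineDerivAt ℝ f ⟪g', z⟫ x z := by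
  simpa using h.hasFDerivAt.hasLineDerivAt z

lemma integrable_inner_and_hasLineDerivAt_integral_comp (hJ : ∀ p, ConvexOn ℝ univ (J · p))
    (hgrad : ∀ p v, HasGradientAt (J · p) (g v p) v)
    (hint : ∀ v, Integrable (fun p => J (A p v) p) μ) (v δ : E) :
    Integrable (fun p => ⟪g (A p v) p, A p δ⟫) μ ∧
      HasLineDerivAt ℝ (fun w => ∫ p, J (A p w) p ∂μ) (∫ p, ⟪g (A p v) p, A p δ⟫ ∂μ) v δ := by
  have := hasDerivAt_integral_of_convexOn (φ := fun p t => J (A p v + t • A p δ) p) (x := 0)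
    (fun p => (hJ p).comp_line _ _) (fun p => (hgrad p (A p v)).hasLineDerivAt (A p δ))
    (fun t => by simpa using hint (v + t • δ))
  simpa [HasLineDerivAt] using this

lemma exists_hasLineDerivAt_integral_comp [CompleteSpace E] (hJ : ∀ p, ConvexOn ℝ univ (J · p))
    (hgrad : ∀ p v, HasGradientAt (J · p) (g v p) v)
    (hint : ∀ v, Integrable (fun p => J (A p v) p) μ) (v : E) :
    ∃ L : StrongDual ℝ E, ∀ δ, HasLineDerivAt ℝ (fun w => ∫ p, J (A p w) p ∂μ) (L δ) v δ ∧
      L δ = ∫ p, ⟪g (A p v) p, A p δ⟫ ∂μ := by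
  have h := integrable_inner_and_hasLineDerivAt_integral_comp hJ hgrad hint v
  obtain ⟨L, hL⟩ := exists_continuousLinearMap_eq_integral
    (ψ := fun p => (innerSL ℝ (g (A p v) p)).comp (A p)) fun δ => by simpa using (h δ).1
  have hL' : ∀ δ, L δ = ∫ p, ⟪g (A p v) p, A p δ⟫ ∂μ := fun δ => by simpa using hL δ
  exact ⟨L, fun δ => ⟨hL' δ ▸ (h δ).2, hL' δ⟩⟩

end IntegralComp

theorem alternating_minimization_spatial_step_general
    {U : Type*} [NormedAddCommGroup U] [InnerProductSpace ℝ U] [CompleteSpace U]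
    {P : Type*} [MeasurableSpace P] (μ : Measure P)
    (α : ℝ) (hα : 0 < α) (J : U → P → ℝ) (g : U → P → U)
    (hgrad : ∀ (p : P) (v : U), HasGradientAt (fun x => J x p) (g v p) v)
    (hconv : ∀ (p : P) (v w : U), ∀ t ∈ Set.Icc (0 : ℝ) 1,
      J (t • v + (1 - t) • w) p ≤
        t * J v p + (1 - t) * J w p - α / 2 * (t * (1 - t)) * ‖v - w‖ ^ 2)
    (hint : ∀ u : P → U, MemLp u 2 μ → Integrable (fun p => J (u p) p) μ)
    (r : ℕ) (lam : Fin r → P → ℝ) (hlam : ∀ i, MemLp (lam i) 2 μ)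
    (hli : LinearIndependent ℝ fun i => MemLp.toLp (lam i) (hlam i)) :
    (∃! vstar : Fin r → U, ∀ v : Fin r → U,
        (∫ p, J (∑ i, lam i p • vstar i) p ∂μ) ≤ ∫ p, J (∑ i, lam i p • v i) p ∂μ) ∧
    (∀ vstar : Fin r → U,
      (∀ v : Fin r → U,
          (∫ p, J (∑ i, lam i p • vstar i) p ∂μ) ≤ ∫ p, J (∑ i, lam i p • v i) p ∂μ) ↔
        (∀ δv : Fin r → U,
          (∫ p, ⟪g (∑ i, lam i p • vstar i) p, ∑ i, lam i p • δv i⟫ ∂μ) = 0)) := by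
  let A : P → (Fin r → U) →L[ℝ] U := fun p => weightedSum fun i => lam i p
  have hA : ∀ v, MemLp (fun p => A p v) 2 μ := memLp_weightedSum hlam
  have hJint : ∀ v, Integrable (fun p => J (A p v) p) μ := fun v => hint _ (hA v)
  have hJ : ∀ p, StrongConvexOn univ α (J · p) := fun p =>
    strongConvexOn_univ_of_forall_mem_Icc (hconv p)
  obtain ⟨c, hc, hcoer⟩ := exists_pos_mul_norm_sq_le_integral_weightedSum (U := U) hlam hli
  have hG := strongConvexOn_integral_comp hα.le hJ hJint hA hcoer
  have hαc : 0 < α * c := mul_pos hα hc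
  choose L hL using exists_hasLineDerivAt_integral_comp (fun p => (hJ p).convexOn hα.le) hgrad hJint
  refine ⟨?_, fun v => ?_⟩
  · obtain ⟨v, hv⟩ := hG.exists_forall_le hαc fun v δ => (hL v δ).1
    exact ⟨v, hv, fun w hw => hG.eq_of_forall_le hαc hw hv⟩
  · refine (forall_le_iff_eq_zero_of_hasLineDerivAt (hG.convexOn hαc.le)
      fun δ => (hL v δ).1).trans ?_
    rw [ContinuousLinearMap.ext_iff]
    simp only [(hL v _).2, zero_apply]
    rfl

/-- Alternating minimization step on the spatial vectors: with `(λᵢ)` linearly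
independent in `L²(μ;ℝ)`, the map
`(v₁,…,v_r) ↦ ∫ J(∑ᵢ λᵢ(p) • vᵢ; p) dμ` has a unique minimizer `v*` over
`𝒰ʳ`, characterized by the stationarity equations
`∫ ⟪∇J(F_r(λ,v*)(p);p), F_r(λ,δv)(p)⟫ dμ = 0` for all `δv ∈ 𝒰ʳ`. -/
theorem alternating_minimization_spatial_step
    {U : Type*} [NormedAddCommGroup U] [InnerProductSpace ℝ U] [CompleteSpace U]
    {P : Type*} [MeasurableSpace P] (μ : Measure P) [IsFiniteMeasure μ]
    (α : ℝ) (hα : 0 < α) (J : U → P → ℝ) (g : U → P → U)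
    (hgrad : ∀ (p : P) (v : U), HasGradientAt (fun x => J x p) (g v p) v)
    (hconv : ∀ (p : P) (v w : U), ∀ t ∈ Set.Icc (0 : ℝ) 1,
      J (t • v + (1 - t) • w) p ≤
        t * J v p + (1 - t) * J w p - α / 2 * (t * (1 - t)) * ‖v - w‖ ^ 2)
    (hint : ∀ u : P → U, MemLp u 2 μ → Integrable (fun p => J (u p) p) μ)
    (r : ℕ) (lam : Fin r → P → ℝ) (hlam : ∀ i, MemLp (lam i) 2 μ)
    (hli : LinearIndependent ℝ fun i => MemLp.toLp (lam i) (hlam i)) :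
    (∃! vstar : Fin r → U, ∀ v : Fin r → U,
        (∫ p, J (∑ i, lam i p • vstar i) p ∂μ) ≤ ∫ p, J (∑ i, lam i p • v i) p ∂μ) ∧
    (∀ vstar : Fin r → U,
      (∀ v : Fin r → U,
          (∫ p, J (∑ i, lam i p • vstar i) p ∂μ) ≤ ∫ p, J (∑ i, lam i p • v i) p ∂μ) ↔
        (∀ δv : Fin r → U,
          (∫ p, ⟪g (∑ i, lam i p • vstar i) p, ∑ i, lam i p • δv i⟫ ∂μ) = 0)) :=
  alternating_minimization_spatial_step_general μ α hα J g hgrad hconv hint r lam hlam hli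
end
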